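/- The polynomial F(w¹,w²,w³,w⁴) = w¹((w¹w³ + (w²)²)/12 + (w⁴)²/4) + (w²)²(w³)³/1296 − (w²)³w³/216 + (w³)⁷/1632960 + (w²w³/24 + (w³)³/432)(w⁴)² satisfies the WDVV associativity equations on ℝ⁴ with constant metric η given by η₁₃ = η₃₁ = 1/6, η₂₂ = 1/6, η₄₄ = 1/2 and all other entries zero: for all α,β one has ∂₁∂_α∂_β F = η_{αβ}, the matrix η is invertible, and the structure constants c^γ_{αβ} = Σ_ε (η⁻¹)^{γε} ∂_ε∂_α∂_β F satisfy Σ_ε c^ε_{αβ} c^σ_{εγ} = Σ_ε c^ε_{αγ} c^σ_{εβ} for all α,β,γ,σ at every point of ℝ⁴. -/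

import Mathlib

/-!
The third derivatives of `F` are explicit polynomials, and their slice `∂₁∂_α∂_β F` is the
constant matrix `η`. So the multiplication operators `C_α = η⁻¹ ∂_α Hess F`, whose entries are
the structure constants `c^σ_{αβ}`, satisfy `C_1 = 1`. The multiplication is commutative, and a
commutative multiplication is associative once its multiplication operators commute:
`(e_α e_β) e_γ = C_γ C_α e_β = C_α C_γ e_β = C_α C_β e_γ = C_β C_α e_γ = (e_α e_γ) e_β`.
It remains to check that `C_2, C_3, C_4` commute pairwise, a polynomial identity.
In Lean the coordinates `w¹, …, w⁴` are `w 0, …, w 3`.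
-/

/-- Partial derivative of `f : (Fin N → ℝ) → ℝ` in the `i`-th coordinate direction. -/
noncomputable def pd {N : ℕ} (i : Fin N) (f : (Fin N → ℝ) → ℝ) : (Fin N → ℝ) → ℝ :=
  fun x => fderiv ℝ f x (Pi.single i 1)

/-- The potential. -/
noncomputable def FF : (Fin 4 → ℝ) → ℝ :=
  fun w => w 0 * ((w 0 * w 2 + (w 1) ^ 2) / 12 + (w 3) ^ 2 / 4) + (w 1) ^ 2 * (w 2) ^ 3 / 1296 - (w 1) ^ 3 * w 2 / 216 + (w 2) ^ 7 / 1632960 + (w 1 * w 2 / 24 + (w 2) ^ 3 / 432) * (w 3) ^ 2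

/-- The constant metric. -/
noncomputable def eta : Matrix (Fin 4) (Fin 4) ℝ :=
  !![0, 0, 1/6, 0; 0, 1/6, 0, 0; 1/6, 0, 0, 0; 0, 0, 0, 1/2]

/-- Third partial derivatives `c_(αβγ) = ∂_α ∂_β ∂_γ F`. -/
noncomputable def c3 (α β γ : Fin 4) (x : Fin 4 → ℝ) : ℝ :=
  pd α (pd β (pd γ FF)) x

/-- Structure constants `c^γ_(αβ) = Σ_ε (η⁻¹)^(γε) c_(εαβ)`. -/
noncomputable def cUp (γ α β : Fin 4) (x : Fin 4 → ℝ) : ℝ :=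
  ∑ ε, eta⁻¹ γ ε * c3 ε α β x

section PartialDerivative

variable {N : ℕ} {f g : (Fin N → ℝ) → ℝ} {x : Fin N → ℝ} (i : Fin N)

lemma pd_add (hf : DifferentiableAt ℝ f x) (hg : DifferentiableAt ℝ g x) :
    pd i (fun y => f y + g y) x = pd i f x + pd i g x := by
  simp [pd, fderiv_fun_add hf hg]

lemma pd_sub (hf : DifferentiableAt ℝ f x) (hg : DifferentiableAt ℝ g x) :
    pd i (fun y => f y - g y) x = pd i f x - pd i g x := by
  simp [pd, fderiv_fun_sub hf hg]

lemma pd_mul (hf : DifferentiableAt ℝ f x) (hg : DifferentiableAt ℝ g x) :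
    pd i (fun y => f y * g y) x = f x * pd i g x + g x * pd i f x := by
  simp [pd, fderiv_fun_mul hf hg]

lemma pd_pow (n : ℕ) (hf : DifferentiableAt ℝ f x) :
    pd i (fun y => f y ^ n) x = n * f x ^ (n - 1) * pd i f x := by
  simp [pd, fderiv_fun_pow n hf, mul_assoc]

lemma pd_div_const (c : ℝ) (hf : DifferentiableAt ℝ f x) :
    pd i (fun y => f y / c) x = pd i f x / c := by
  simp [pd, div_eq_mul_inv, fderiv_mul_const hf, mul_comm]

lemma pd_apply (j : Fin N) : pd i (fun y => y j) x = if j = i then 1 else 0 := by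
  rw [pd, show (fun y : Fin N → ℝ => y j) = ContinuousLinearMap.proj (R := ℝ) j from rfl,
    ContinuousLinearMap.fderiv]
  simp [Pi.single_apply]

end PartialDerivative

section StructureConstants

variable {ι R : Type*} [Fintype ι] [CommSemiring R]

/-- `c σ α β` plays the role of `c^σ_{αβ}`; this is the matrix of multiplication by `e_α`. -/
def mulMatrix (c : ι → ι → ι → R) (α : ι) : Matrix ι ι R :=
  Matrix.of fun σ ε => c σ α ε

theorem assoc_of_commute_mulMatrix (c : ι → ι → ι → R) (hc : ∀ σ α β, c σ α β = c σ β α)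
    (hcomm : ∀ α β, Commute (mulMatrix c α) (mulMatrix c β)) (α β γ σ : ι) :
    ∑ ε, c ε α β * c σ ε γ = ∑ ε, c ε α γ * c σ ε β := by
  have key : ∀ β γ, ∑ ε, c ε α β * c σ ε γ = ∑ ε, c σ α ε * c ε γ β := fun β γ =>
    calc ∑ ε, c ε α β * c σ ε γ = (mulMatrix c γ * mulMatrix c α) σ β := by
          simp only [mulMatrix, Matrix.mul_apply, Matrix.of_apply]
          exact Finset.sum_congr rfl fun ε _ => by rw [hc σ ε γ, mul_comm]
      _ = (mulMatrix c α * mulMatrix c γ) σ β := by rw [(hcomm γ α).eq]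
      _ = ∑ ε, c σ α ε * c ε γ β := by simp only [mulMatrix, Matrix.mul_apply, Matrix.of_apply]
  rw [key, key]
  exact Finset.sum_congr rfl fun ε _ => by rw [hc ε γ β]

end StructureConstants

noncomputable def gradFF (w : Fin 4 → ℝ) : Fin 4 → ℝ :=
  ![w 0 * w 2 / 6 + w 1 ^ 2 / 12 + w 3 ^ 2 / 4,
    w 0 * w 1 / 6 + w 1 * w 2 ^ 3 / 648 - w 1 ^ 2 * w 2 / 72 + w 2 * w 3 ^ 2 / 24,
    w 0 ^ 2 / 12 + w 1 ^ 2 * w 2 ^ 2 / 432 - w 1 ^ 3 / 216 + w 2 ^ 6 / 233280 + w 1 * w 3 ^ 2 / 24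
      + w 2 ^ 2 * w 3 ^ 2 / 144,
    w 0 * w 3 / 2 + w 1 * w 2 * w 3 / 12 + w 2 ^ 3 * w 3 / 216]

noncomputable def hessFF (w : Fin 4 → ℝ) : Matrix (Fin 4) (Fin 4) ℝ :=
  !![w 2 / 6, w 1 / 6, w 0 / 6, w 3 / 2;
    w 1 / 6, w 0 / 6 + w 2 ^ 3 / 648 - w 1 * w 2 / 36,
      w 1 * w 2 ^ 2 / 216 - w 1 ^ 2 / 72 + w 3 ^ 2 / 24, w 2 * w 3 / 12;
    w 0 / 6, w 1 * w 2 ^ 2 / 216 - w 1 ^ 2 / 72 + w 3 ^ 2 / 24,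
      w 1 ^ 2 * w 2 / 216 + w 2 ^ 5 / 38880 + w 2 * w 3 ^ 2 / 72,
      w 1 * w 3 / 12 + w 2 ^ 2 * w 3 / 72;
    w 3 / 2, w 2 * w 3 / 12, w 1 * w 3 / 12 + w 2 ^ 2 * w 3 / 72,
      w 0 / 2 + w 1 * w 2 / 12 + w 2 ^ 3 / 216]

noncomputable def thirdFF (w : Fin 4 → ℝ) : Fin 4 → Matrix (Fin 4) (Fin 4) ℝ :=
  ![eta,
    !![0, 1/6, 0, 0;
      1/6, -w 2 / 36, w 2 ^ 2 / 216 - w 1 / 36, 0;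
      0, w 2 ^ 2 / 216 - w 1 / 36, w 1 * w 2 / 108, w 3 / 12;
      0, 0, w 3 / 12, w 2 / 12],
    !![1/6, 0, 0, 0;
      0, w 2 ^ 2 / 216 - w 1 / 36, w 1 * w 2 / 108, w 3 / 12;
      0, w 1 * w 2 / 108, w 1 ^ 2 / 216 + w 2 ^ 4 / 7776 + w 3 ^ 2 / 72, w 2 * w 3 / 36;
      0, w 3 / 12, w 2 * w 3 / 36, w 1 / 12 + w 2 ^ 2 / 72],
    !![0, 0, 0, 1/2;
      0, 0, w 3 / 12, w 2 / 12;
      0, w 3 / 12, w 2 * w 3 / 36, w 1 / 12 + w 2 ^ 2 / 72;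
      1/2, w 2 / 12, w 1 / 12 + w 2 ^ 2 / 72, 0]]

lemma pd_FF (i : Fin 4) : pd i FF = fun w => gradFF w i := by
  unfold FF
  funext w
  simp (disch := fun_prop) only [pd_add, pd_sub, pd_mul, pd_pow, pd_div_const, pd_apply]
  fin_cases i <;> norm_num [gradFF, Fin.ext_iff] <;> ring

lemma pd_gradFF (i j : Fin 4) : pd i (fun w => gradFF w j) = fun w => hessFF w i j := by
  funext w
  fin_cases i <;> fin_cases j <;>
    simp only [Fin.reduceFinMk, gradFF, hessFF, Matrix.of_apply, Matrix.cons_val] <;>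
    simp (disch := fun_prop) only [pd_add, pd_sub, pd_mul, pd_pow, pd_div_const, pd_apply] <;>
    norm_num [Fin.ext_iff] <;> ring

lemma pd_hessFF (i j k : Fin 4) : pd i (fun w => hessFF w j k) = fun w => thirdFF w i j k := by
  funext w
  fin_cases i <;> fin_cases j <;> fin_cases k <;>
    simp only [Fin.reduceFinMk, hessFF, thirdFF, eta, Matrix.of_apply, Matrix.cons_val] <;>
    simp (disch := fun_prop) only [pd_add, pd_sub, pd_mul, pd_pow, pd_div_const, pd_apply] <;>
    norm_num [Fin.ext_iff] <;> ring

lemma thirdFF_zero (x : Fin 4 → ℝ) : thirdFF x 0 = eta := rfl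

lemma thirdFF_comm_left (x : Fin 4 → ℝ) (α β γ : Fin 4) : thirdFF x α β γ = thirdFF x β α γ := by
  fin_cases α <;> fin_cases β <;> fin_cases γ <;> rfl

lemma thirdFF_comm_right (x : Fin 4 → ℝ) (α β γ : Fin 4) : thirdFF x α β γ = thirdFF x α γ β := by
  fin_cases α <;> fin_cases β <;> fin_cases γ <;> rfl

lemma c3_eq_thirdFF (α β γ : Fin 4) (x : Fin 4 → ℝ) : c3 α β γ x = thirdFF x α β γ := by
  simp only [c3, pd_FF, pd_gradFF, pd_hessFF]

lemma eta_mul_eq_one : eta * !![0, 0, 6, 0; 0, 6, 0, 0; 6, 0, 0, 0; 0, 0, 0, 2] = 1 := by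
  ext i j
  fin_cases i <;> fin_cases j <;>
    norm_num [eta, Matrix.mul_apply, Fin.sum_univ_succ, Matrix.one_apply, Fin.ext_iff]

lemma eta_inv : eta⁻¹ = !![0, 0, 6, 0; 0, 6, 0, 0; 6, 0, 0, 0; 0, 0, 0, 2] :=
  Matrix.inv_eq_right_inv eta_mul_eq_one

lemma isUnit_det_eta : IsUnit eta.det :=
  Matrix.isUnit_det_of_right_inverse eta_mul_eq_one

lemma cUp_comm (x : Fin 4 → ℝ) (σ α β : Fin 4) : cUp σ α β x = cUp σ β α x := by
  simp only [cUp, c3_eq_thirdFF, thirdFF_comm_right x _ α β]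

lemma mulMatrix_cUp (x : Fin 4 → ℝ) (α : Fin 4) :
    mulMatrix (fun σ α β => cUp σ α β x) α = eta⁻¹ * thirdFF x α := by
  ext σ β
  simp only [mulMatrix, Matrix.of_apply, cUp, Matrix.mul_apply, c3_eq_thirdFF,
    thirdFF_comm_left x _ α]

lemma commute_etaInv_mul_thirdFF_of_lt (x : Fin 4 → ℝ) {α β : Fin 4} (hα : α ≠ 0) (hαβ : α < β) :
    Commute (eta⁻¹ * thirdFF x α) (eta⁻¹ * thirdFF x β) := by
  fin_cases α <;> fin_cases β <;> try (exfalso; revert hα hαβ; decide)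
  all_goals
    rw [eta_inv]
    ext i j
    fin_cases i <;> fin_cases j <;> simp [thirdFF, Matrix.mul_apply, Fin.sum_univ_succ] <;> ring

lemma commute_etaInv_mul_thirdFF (x : Fin 4 → ℝ) (α β : Fin 4) :
    Commute (eta⁻¹ * thirdFF x α) (eta⁻¹ * thirdFF x β) := by
  have hunit : eta⁻¹ * thirdFF x 0 = 1 := Matrix.nonsing_inv_mul eta isUnit_det_eta
  by_cases hα : α = 0
  · rw [hα, hunit]
    exact Commute.one_left _
  by_cases hβ : β = 0
  · rw [hβ, hunit]
    exact Commute.one_right _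
  rcases lt_trichotomy α β with hαβ | rfl | hβα
  · exact commute_etaInv_mul_thirdFF_of_lt x hα hαβ
  · exact Commute.refl _
  · exact (commute_etaInv_mul_thirdFF_of_lt x hβ hβα).symm

theorem stmt_2 :
    (∀ (α β : Fin 4) (x : Fin 4 → ℝ), c3 0 α β x = eta α β) ∧
    IsUnit eta.det ∧
    (∀ (α β γ σ : Fin 4) (x : Fin 4 → ℝ), 
      ∑ ε, cUp ε α β x * cUp σ ε γ x = ∑ ε, cUp ε α γ x * cUp σ ε β x) := by
  refine ⟨fun α β x => by rw [c3_eq_thirdFF, thirdFF_zero], isUnit_det_eta, fun α β γ σ x => ?_⟩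
  refine assoc_of_commute_mulMatrix (fun σ α β => cUp σ α β x) (cUp_comm x) (fun α β => ?_) α β γ σ
  rw [mulMatrix_cUp, mulMatrix_cUp]
  exact commute_etaInv_mul_thirdFF x α β
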